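/- arXiv:math/0408168 — 3 statements merged into one kernel-verified Lean document; each statement's English description precedes it below -/
import Mathlib

section
/- Assume the abc conjecture over ℚ: for every ε > 0 there exists a constant C(ε) such that for all nonzero coprime integers a, b, c with a + b = c one has log max(|a|,|b|,|c|) ≤ (1+ε)·log rad(abc) + C(ε). Then for every ε with 0 < ε < 2 there exists a real number γ (depending only on ε and on C) such that for every finite set S of prime numbers and all coprime integers p, q with p(p−q)(p+q)q ≠ 0 such that every prime factor of p, of q, of q − p, and of q + p lies in S, one has log max(|p|,|q|) ≤ (1/(2−ε))·∑_{ℓ ∈ S} log ℓ + γ. (This is the instance of the paper's Theorem 'abc implies effective Siegel' for the curve U = ℙ¹ ∖ {0, 1, −1, ∞} over ℚ, which has χ(U) = −2, with Belyi function f(x) = x² of degree d = 2.) -/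
/-- **abc implies effective Siegel for `ℙ¹ ∖ {0, 1, -1, ∞}` over `ℚ`** (Belyi function
`f(x) = x²`, `χ(U) = -2`).
Assume the abc conjecture over `ℚ`: for every `ε > 0` there is a constant `C ε` such that for
all nonzero coprime integers `a, b, c` with `a + b = c` one has
`log max (|a|,|b|,|c|) ≤ (1+ε) · ∑_{p ∣ abc} log p + C ε`.
Then for every `0 < ε < 2` there is `γ` such that for every finite set `S` of primes and all
coprime integers `p, q` with `p(p-q)(p+q)q ≠ 0` such that every prime factor of `p`, `q`,
`q - p` and `q + p` lies in `S`, one has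
`log max (|p|,|q|) ≤ (1/(2-ε)) · ∑_{ℓ ∈ S} log ℓ + γ`. -/
theorem abc_implies_effective_siegel_rat_four_points
    (C : ℝ → ℝ)
    (habc : ∀ ε : ℝ, 0 < ε → ∀ a b c : ℤ, a ≠ 0 → b ≠ 0 → c ≠ 0 →
      Int.gcd (Int.gcd a b) c = 1 → a + b = c →
      Real.log (max |(a : ℝ)| (max |(b : ℝ)| |(c : ℝ)|)) ≤
        (1 + ε) * (∑ p ∈ (a * b * c).natAbs.primeFactors, Real.log p) + C ε) :
    ∀ ε : ℝ, 0 < ε → ε < 2 → ∃ γ : ℝ,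
      ∀ S : Finset ℕ, (∀ ℓ ∈ S, ℓ.Prime) →
        ∀ p q : ℤ, Int.gcd p q = 1 → p * (p - q) * (p + q) * q ≠ 0 →
          (∀ ℓ : ℕ, ℓ.Prime →
            ((ℓ : ℤ) ∣ p ∨ (ℓ : ℤ) ∣ q ∨ (ℓ : ℤ) ∣ (q - p) ∨ (ℓ : ℤ) ∣ (q + p)) → ℓ ∈ S) →
          Real.log (max |(p : ℝ)| |(q : ℝ)|) ≤
            (1 / (2 - ε)) * (∑ ℓ ∈ S, Real.log ℓ) + γ := by

  intro ε hε hε2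
  have h2ε : (0:ℝ) < 2 - ε := by linarith
  have hε' : 0 < ε / (2 - ε) := div_pos hε h2ε
  refine ⟨C (ε / (2 - ε)) / 2, ?_⟩
  intro S hS p q hgcd hne hdiv
  rw [mul_ne_zero_iff, mul_ne_zero_iff, mul_ne_zero_iff] at hne
  obtain ⟨⟨⟨hp, hpq⟩, hpq'⟩, hq⟩ := hne
  have ha : p ^ 2 ≠ 0 := pow_ne_zero _ hp
  have hb : q ^ 2 - p ^ 2 ≠ 0 := by
    intro h
    have : (q - p) * (q + p) = 0 := by ring_nf; linarith [sq_nonneg q]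
    rcases mul_eq_zero.mp this with h' | h'
    · exact hpq (by linarith [h'])
    · exact hpq' (by linarith [h'])
  have hc : q ^ 2 ≠ 0 := pow_ne_zero _ hq
  have hcop : IsCoprime p q := Int.isCoprime_iff_gcd_eq_one.mpr hgcd
  have hcop2 : IsCoprime (p ^ 2) (q ^ 2) := (hcop.pow : _)
  have hgcd2 : Int.gcd (Int.gcd (p ^ 2) (q ^ 2 - p ^ 2)) (q ^ 2) = 1 := by
    rw [← Int.isCoprime_iff_gcd_eq_one]
    exact hcop2.of_isCoprime_of_dvd_left (Int.gcd_dvd_left _ _)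
  have key := habc (ε / (2 - ε)) hε' (p ^ 2) (q ^ 2 - p ^ 2) (q ^ 2) ha hb hc hgcd2 (by ring)
  -- prime factors subset
  have hsub : (p ^ 2 * (q ^ 2 - p ^ 2) * q ^ 2).natAbs.primeFactors ⊆ S := by
    intro ℓ hℓ
    rw [Nat.mem_primeFactors] at hℓ
    obtain ⟨hℓp, hℓd, -⟩ := hℓ
    have hℓz : (ℓ : ℤ) ∣ p ^ 2 * (q ^ 2 - p ^ 2) * q ^ 2 := (Int.natCast_dvd_natCast.mpr hℓd).trans (Int.natAbs_dvd.mpr dvd_rfl)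
    have hpr : Prime (ℓ : ℤ) := Nat.prime_iff_prime_int.mp hℓp
    apply hdiv ℓ hℓp
    rcases hpr.dvd_mul.mp hℓz with h | h
    · rcases hpr.dvd_mul.mp h with h | h
      · exact Or.inl (hpr.dvd_of_dvd_pow h)
      · have : (ℓ : ℤ) ∣ (q - p) * (q + p) := by
          have : q ^ 2 - p ^ 2 = (q - p) * (q + p) := by ring
          rwa [this] at h
        rcases hpr.dvd_mul.mp this with h | h
        · exact Or.inr (Or.inr (Or.inl h))
        · exact Or.inr (Or.inr (Or.inr h))
    · exact Or.inr (Or.inl (hpr.dvd_of_dvd_pow h))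
  have hsum : (∑ ℓ ∈ (p ^ 2 * (q ^ 2 - p ^ 2) * q ^ 2).natAbs.primeFactors, Real.log ℓ)
      ≤ ∑ ℓ ∈ S, Real.log ℓ := by
    apply Finset.sum_le_sum_of_subset_of_nonneg hsub
    intro ℓ hℓ _
    have : (1:ℝ) ≤ ℓ := by exact_mod_cast (hS ℓ hℓ).one_lt.le
    exact Real.log_nonneg this
  -- log comparison
  have hpm : (0:ℝ) < max |(p:ℝ)| |(q:ℝ)| := by
    have : (0:ℝ) < |(p:ℝ)| := abs_pos.mpr (by exact_mod_cast hp)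
    exact lt_max_of_lt_left this
  have hlog : 2 * Real.log (max |(p:ℝ)| |(q:ℝ)|) ≤
      Real.log (max |((p ^ 2 : ℤ) : ℝ)| (max |((q ^ 2 - p ^ 2 : ℤ) : ℝ)| |((q ^ 2 : ℤ) : ℝ)|)) := by
    have hsq : Real.log ((max |(p:ℝ)| |(q:ℝ)|) ^ 2) = 2 * Real.log (max |(p:ℝ)| |(q:ℝ)|) := by
      rw [Real.log_pow]; norm_num
    rw [← hsq]
    apply Real.log_le_log (by positivity)
    push_cast
    rcases max_cases |(p:ℝ)| |(q:ℝ)| with ⟨he, -⟩ | ⟨he, -⟩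
    · rw [he]
      refine le_max_of_le_left ?_
      rw [abs_pow]
    · rw [he]
      refine le_max_of_le_right (le_max_of_le_right ?_)
      rw [abs_pow]
  have hcoef : (1 + ε / (2 - ε)) / 2 = 1 / (2 - ε) := by
    field_simp
    ring
  have h1e : 0 ≤ 1 + ε / (2 - ε) := by linarith
  have hS0 : 0 ≤ ∑ ℓ ∈ S, Real.log ℓ := by
    apply Finset.sum_nonneg
    intro ℓ hℓ
    have : (1:ℝ) ≤ ℓ := by exact_mod_cast (hS ℓ hℓ).one_lt.le
    exact Real.log_nonneg this
  have := hsum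
  nlinarith [key, hlog, mul_le_mul_of_nonneg_left hsum h1e,
    mul_div_cancel₀ (1 + ε / (2 - ε)) (two_ne_zero (α := ℝ))]
end

section
/- Let K be a number field. Assume the abc conjecture over K: for every ε > 0 there exists a constant c(ε, K) such that for all a, b, c ∈ K ∖ {0} with a + b = c one has h_K(a:b:c) ≤ (1+ε)·rad(a:b:c) + c(ε, K). Then for every ε with 0 < ε < 1 there exists a real number γ (depending on K, ε and the constants c(·,K), but not on S or on the point) such that for every finite set S of nonzero prime ideals of O_K and every u ∈ K ∖ {0,1} such that both u and 1 − u are S-units, one has h_K(u:1) ≤ (1/(1−ε))·∑_{𝔭 ∈ S} log N(𝔭) + γ. (This is the instance of the paper's Theorem 'abc implies effective Siegel' for the curve U = ℙ¹ ∖ {0,1,∞} over K, with χ(U) = −1.) -/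
open NumberField IsDedekindDomain

/-- The additive `𝔭`-adic valuation `v_𝔭(x)` of `x ∈ K^×`, extended by `0` at `x = 0`. -/
noncomputable def vIntK (K : Type) [Field K] [NumberField K]
    (v : HeightOneSpectrum (𝓞 K)) (x : K) : ℤ :=
  if h : v.valuation K x = 0 then 0 else -Multiplicative.toAdd (WithZero.unzero h)

/-- `log N(𝔭)`, the logarithm of the absolute norm of the prime ideal `𝔭`. -/
noncomputable def logNormK (K : Type) [Field K] [NumberField K]
    (v : HeightOneSpectrum (𝓞 K)) : ℝ :=
  Real.log (Ideal.absNorm v.asIdeal)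

/-- The relative height `h_K(x₀:x₁:x₂) = ∑_v d_v log max_i |x_i|_v`: the archimedean part is a
sum over the infinite places weighted by the local degrees `mult w`, and at a finite place `𝔭`
one has `d_𝔭 · log max_i |x_i|_𝔭 = (max_i (-v_𝔭(x_i))) · log N(𝔭)`. -/
noncomputable def heightProjK (K : Type) [Field K] [NumberField K] (x₀ x₁ x₂ : K) : ℝ :=
  (∑ w : InfinitePlace K, (w.mult : ℝ) * Real.log (max (w x₀) (max (w x₁) (w x₂))))
    + ∑ᶠ v : HeightOneSpectrum (𝓞 K),
        ((max (-(vIntK K v x₀)) (max (-(vIntK K v x₁)) (-(vIntK K v x₂))) : ℤ) : ℝ)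
          * logNormK K v

/-- The relative height `h_K(u:1) = ∑_v d_v log max (|u|_v, 1)`. -/
noncomputable def height1K (K : Type) [Field K] [NumberField K] (u : K) : ℝ :=
  (∑ w : InfinitePlace K, (w.mult : ℝ) * Real.log (max (w u) 1))
    + ∑ᶠ v : HeightOneSpectrum (𝓞 K), ((max (-(vIntK K v u)) 0 : ℤ) : ℝ) * logNormK K v

/-- The radical `rad(x₀:x₁:x₂) = ∑ log N(𝔭)`, summed over the nonzero prime ideals `𝔭` for
which the set `{v_𝔭(x₀), v_𝔭(x₁), v_𝔭(x₂)}` has at least two elements. -/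
noncomputable def radK (K : Type) [Field K] [NumberField K] (x₀ x₁ x₂ : K) : ℝ :=
  ∑ᶠ v : HeightOneSpectrum (𝓞 K),
    if 2 ≤ ({vIntK K v x₀, vIntK K v x₁, vIntK K v x₂} : Finset ℤ).card
    then logNormK K v else 0

/-- `log d_K`, the logarithm of the absolute value of the discriminant of `K`. -/
noncomputable def logDiscK (K : Type) [Field K] [NumberField K] : ℝ :=
  Real.log |(NumberField.discr K : ℝ)|

/-!
Apply abc to `u + (1 - u) = 1` with `ε' = ε / (1 - ε)`, so that `1 + ε' = 1 / (1 - ε)`.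
Adding the coordinate `1` does not decrease the height, so `h_K(u:1) ≤ h_K(u:1-u:1)`; and since
`u`, `1 - u` and `1` are `S`-units, every prime counted in `rad(u:1-u:1)` lies in `S`.
-/

theorem finsum_eq_sum_of_forall_notMem {α M : Type*} [AddCommMonoid M] {f : α → M}
    (s : Finset α) (h : ∀ a ∉ s, f a = 0) : ∑ᶠ a, f a = ∑ a ∈ s, f a :=
  finsum_eq_sum_of_support_subset f (Function.support_subset_iff'.2 h)

section SUnits

variable {K : Type} [Field K] [NumberField K]

def IsSUnitK (S : Finset (HeightOneSpectrum (𝓞 K))) (x : K) : Prop :=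
  ∀ v ∉ S, vIntK K v x = 0

theorem vIntK_one (v : HeightOneSpectrum (𝓞 K)) : vIntK K v 1 = 0 := by
  simp only [vIntK, map_one, one_ne_zero, ↓reduceDIte, WithZero.unzero_coe, neg_eq_zero,
    toAdd_eq_zero]
  rfl

theorem isSUnitK_one (S : Finset (HeightOneSpectrum (𝓞 K))) : IsSUnitK S (1 : K) :=
  fun v _ => vIntK_one v

theorem logNormK_nonneg (v : HeightOneSpectrum (𝓞 K)) : 0 ≤ logNormK K v := by
  have : Ideal.absNorm v.asIdeal ≠ 0 := by simp [Ideal.absNorm_eq_zero_iff, v.ne_bot]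
  exact Real.log_nonneg (mod_cast Nat.one_le_iff_ne_zero.mpr this)

theorem radK_le_sum_logNormK {S : Finset (HeightOneSpectrum (𝓞 K))} {x₀ x₁ x₂ : K}
    (h₀ : IsSUnitK S x₀) (h₁ : IsSUnitK S x₁) (h₂ : IsSUnitK S x₂) :
    radK K x₀ x₁ x₂ ≤ ∑ v ∈ S, logNormK K v := by
  unfold radK
  rw [finsum_eq_sum_of_forall_notMem S]
  · refine Finset.sum_le_sum fun v _ => ?_
    split_ifs
    exacts [le_rfl, logNormK_nonneg v]
  · intro v hv
    simp [h₀ v hv, h₁ v hv, h₂ v hv]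

theorem height1K_le_heightProjK {S : Finset (HeightOneSpectrum (𝓞 K))} {u b : K}
    (hu : IsSUnitK S u) (hb : IsSUnitK S b) : height1K K u ≤ heightProjK K u b 1 := by
  unfold height1K heightProjK
  refine add_le_add (Finset.sum_le_sum fun w _ => ?_) ?_
  · gcongr
    rw [map_one]
    exact le_max_right _ _
  · rw [finsum_eq_sum_of_forall_notMem S, finsum_eq_sum_of_forall_notMem S]
    · refine Finset.sum_le_sum fun v _ => mul_le_mul_of_nonneg_right ?_ (logNormK_nonneg v)
      rw [vIntK_one, neg_zero]
      exact_mod_cast max_le_max le_rfl (le_max_right _ _)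
    all_goals intro v hv; simp [hu v hv, hb v hv, vIntK_one]

end SUnits

/-- **abc over `K` implies effective Siegel for `ℙ¹ ∖ {0,1,∞}` over `K`.**
Assume the abc conjecture over the number field `K`: for every `ε > 0` there is a constant
`c ε` such that for all nonzero `a, b, x ∈ K` with `a + b = x` one has
`h_K(a:b:x) ≤ (1+ε)·rad(a:b:x) + c ε`. Then for every `0 < ε < 1` there exists `γ` such that
for every finite set `S` of nonzero prime ideals of `O_K` and every `u ∈ K ∖ {0,1}` such that
`u` and `1 - u` are `S`-units, one has
`h_K(u:1) ≤ (1/(1-ε)) · ∑_{𝔭 ∈ S} log N(𝔭) + γ`. -/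
theorem abc_implies_effective_siegel_numberField
    (K : Type) [Field K] [NumberField K]
    (c : ℝ → ℝ)
    (habc : ∀ ε : ℝ, 0 < ε → ∀ a b x : K, a ≠ 0 → b ≠ 0 → x ≠ 0 → a + b = x →
      heightProjK K a b x ≤ (1 + ε) * radK K a b x + c ε) :
    ∀ ε : ℝ, 0 < ε → ε < 1 → ∃ γ : ℝ,
      ∀ S : Finset (HeightOneSpectrum (𝓞 K)), ∀ u : K, u ≠ 0 → u ≠ 1 →
        (∀ v : HeightOneSpectrum (𝓞 K), v ∉ S → vIntK K v u = 0) →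
        (∀ v : HeightOneSpectrum (𝓞 K), v ∉ S → vIntK K v (1 - u) = 0) →
        height1K K u ≤ (1 / (1 - ε)) * (∑ v ∈ S, logNormK K v) + γ := by
  intro ε hε hε1
  refine ⟨c (ε / (1 - ε)), fun S u hu0 hu1 hu h1u => ?_⟩
  have h1ε : 0 < 1 - ε := sub_pos.2 hε1
  have hexponent : 1 + ε / (1 - ε) = 1 / (1 - ε) := by field_simp; ring
  calc height1K K u ≤ heightProjK K u (1 - u) 1 := height1K_le_heightProjK hu h1u
    _ ≤ (1 + ε / (1 - ε)) * radK K u (1 - u) 1 + c (ε / (1 - ε)) :=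
        habc _ (div_pos hε h1ε) u (1 - u) 1 hu0 (sub_ne_zero.2 hu1.symm) one_ne_zero
          (add_sub_cancel u 1)
    _ ≤ (1 / (1 - ε)) * ∑ v ∈ S, logNormK K v + c (ε / (1 - ε)) := by
        rw [hexponent]
        gcongr
        exact radK_le_sum_logNormK hu h1u (isSUnitK_one S)
end

section
/- Suppose there exist real numbers k₁ > 1 and k₃ > 0 such that for every finite set S of prime numbers and every rational number u ∉ {0,1} with both u and 1 − u S-units, one has h(u) ≤ k₁·∑_{p ∈ S} log p + k₃. Then for all nonzero coprime integers a, b, c with a + b = c, one has log max(|a|,|b|,|c|) ≤ k₁·log rad(abc) + k₃ + log 2. (This is the instance over ℚ of the paper's Theorem that the effective Siegel hypothesis implies the abc conjecture, for the curve U = ℙ¹ ∖ {0,1,∞} with the identity as Belyi function.) -/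
lemma sign_cases (c : ℤ) (hc : c ≠ 0) : c.sign = 1 ∨ c.sign = -1 := by
  rcases c with (_ | n) | n
  · exact absurd rfl hc
  · left; rfl
  · right; rfl

lemma aux_num_den (a c : ℤ) (hc : c ≠ 0) (h : Int.gcd a c = 1) :
    ((a : ℚ) / (c : ℚ)).num = c.sign * a ∧ ((a : ℚ) / (c : ℚ)).den = c.natAbs := by
  rw [← Rat.divInt_eq_div]
  constructor
  · rw [Rat.num_divInt, Int.gcd_comm, h]; simp
  · rw [Rat.den_divInt, Int.gcd_comm, h]; simp [hc]

/-- **Effective Siegel for `ℙ¹ ∖ {0,1,∞}` over `ℚ` implies abc over `ℚ`.**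
Suppose there are `k₁ > 1` and `k₃ > 0` such that for every finite set `S` of primes and every
rational `u ∉ {0,1}` with both `u` and `1 - u` `S`-units (all prime factors of numerator and
denominator in `S`), one has `h(u) ≤ k₁ · ∑_{p ∈ S} log p + k₃`, where `h(p/q) = log max (|p|,|q|)`
in lowest terms. Then for all nonzero coprime integers `a, b, c` with `a + b = c`:
`log max (|a|,|b|,|c|) ≤ k₁ · ∑_{p ∣ abc} log p + k₃ + log 2`. -/
theorem effective_siegel_implies_abc_rat
    (k₁ k₃ : ℝ) (hk₁ : 1 < k₁) (hk₃ : 0 < k₃)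
    (hsiegel : ∀ S : Finset ℕ, (∀ p ∈ S, p.Prime) →
      ∀ u : ℚ, u ≠ 0 → u ≠ 1 →
        (∀ p : ℕ, p.Prime → ((p : ℤ) ∣ u.num ∨ p ∣ u.den) → p ∈ S) →
        (∀ p : ℕ, p.Prime → ((p : ℤ) ∣ (1 - u).num ∨ p ∣ (1 - u).den) → p ∈ S) →
        Real.log (max |(u.num : ℝ)| (u.den : ℝ)) ≤ k₁ * (∑ p ∈ S, Real.log p) + k₃) :
    ∀ a b c : ℤ, a ≠ 0 → b ≠ 0 → c ≠ 0 → Int.gcd (Int.gcd a b) c = 1 → a + b = c →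
      Real.log (max |(a : ℝ)| (max |(b : ℝ)| |(c : ℝ)|)) ≤
        k₁ * (∑ p ∈ (a * b * c).natAbs.primeFactors, Real.log p) + k₃ + Real.log 2 := by
  intro a b c ha hb hc hgcd habc
  have hb' : b = c - a := by omega
  have hcq : (c : ℚ) ≠ 0 := by exact_mod_cast hc
  -- pairwise coprimality with c
  have hac : Int.gcd a c = 1 := by
    have hdb : (Int.gcd a c : ℤ) ∣ b := by
      rw [hb']; exact dvd_sub (Int.gcd_dvd_right _ _) (Int.gcd_dvd_left _ _)
    have h1 : (Int.gcd a c : ℤ) ∣ (Int.gcd (Int.gcd a b) c : ℤ) :=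
      Int.dvd_coe_gcd (Int.dvd_coe_gcd (Int.gcd_dvd_left _ _) hdb) (Int.gcd_dvd_right _ _)
    have := Int.natCast_dvd_natCast.mp h1
    rw [hgcd] at this
    exact Nat.dvd_one.mp this
  have hbc : Int.gcd b c = 1 := by
    have hda : (Int.gcd b c : ℤ) ∣ a := by
      have : a = c - b := by omega
      rw [this]; exact dvd_sub (Int.gcd_dvd_right _ _) (Int.gcd_dvd_left _ _)
    have h1 : (Int.gcd b c : ℤ) ∣ (Int.gcd (Int.gcd a b) c : ℤ) :=
      Int.dvd_coe_gcd (Int.dvd_coe_gcd hda (Int.gcd_dvd_left _ _)) (Int.gcd_dvd_right _ _)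
    have := Int.natCast_dvd_natCast.mp h1
    rw [hgcd] at this
    exact Nat.dvd_one.mp this
  set u : ℚ := (a : ℚ) / (c : ℚ) with hu_def
  have hu0 : u ≠ 0 := div_ne_zero (by exact_mod_cast ha) hcq
  have hu1 : u ≠ 1 := by
    intro h
    rw [hu_def, div_eq_one_iff_eq hcq] at h
    have : a = c := by exact_mod_cast h
    omega
  have hbq : (b : ℚ) = (c : ℚ) - (a : ℚ) := by exact_mod_cast congrArg (fun x : ℤ => (x : ℚ)) hb'
  have h1u : 1 - u = (b : ℚ) / (c : ℚ) := by
    rw [hbq, sub_div, div_self hcq]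
  obtain ⟨nu, du⟩ := aux_num_den a c hc hac
  obtain ⟨nb, db⟩ := aux_num_den b c hc hbc
  have habc0 : a * b * c ≠ 0 := by
    simp [ha, hb, hc]
  set S := (a * b * c).natAbs.primeFactors with hS_def
  have hSp : ∀ p ∈ S, p.Prime := fun p hp => Nat.prime_of_mem_primeFactors hp
  have hmem : ∀ p : ℕ, p.Prime → (p : ℤ) ∣ a * b * c → p ∈ S := fun p pp hd =>
    Nat.mem_primeFactors.mpr ⟨pp, Int.natCast_dvd.mp hd, Int.natAbs_ne_zero.mpr habc0⟩
  have sign_dvd : ∀ x : ℤ, (∀ p : ℕ, (p : ℤ) ∣ c.sign * x → (p : ℤ) ∣ x) := by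
    intro x p hd
    rcases sign_cases c hc with h | h <;> rw [h] at hd
    · simpa using hd
    · simpa using hd
  have hSu : ∀ p : ℕ, p.Prime → ((p : ℤ) ∣ u.num ∨ p ∣ u.den) → p ∈ S := by
    intro p pp hd
    rcases hd with hd | hd
    · rw [nu] at hd
      exact hmem p pp (dvd_mul_of_dvd_left (dvd_mul_of_dvd_left (sign_dvd a p hd) b) c)
    · rw [du] at hd
      exact hmem p pp (Dvd.dvd.mul_left (Int.natCast_dvd.mpr hd) _)
  have hS1u : ∀ p : ℕ, p.Prime → ((p : ℤ) ∣ (1 - u).num ∨ p ∣ (1 - u).den) → p ∈ S := by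
    intro p pp hd
    rw [h1u] at hd
    rcases hd with hd | hd
    · rw [nb] at hd
      exact hmem p pp (dvd_mul_of_dvd_left (dvd_mul_of_dvd_right (sign_dvd b p hd) a) c)
    · rw [db] at hd
      exact hmem p pp (Dvd.dvd.mul_left (Int.natCast_dvd.mpr hd) _)
  have H := hsiegel S hSp u hu0 hu1 hSu hS1u
  rw [nu, du] at H
  have hsign : |(c.sign : ℝ)| = 1 := by
    rcases sign_cases c hc with h | h <;> rw [h] <;> norm_num
  have hcabs : ((c.natAbs : ℕ) : ℝ) = |(c : ℝ)| := by
    rw [Nat.cast_natAbs]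
    push_cast
    ring
  have key : Real.log (max |(a : ℝ)| |(c : ℝ)|) ≤ k₁ * (∑ p ∈ S, Real.log p) + k₃ := by
    have h1 : |((c.sign * a : ℤ) : ℝ)| = |(a : ℝ)| := by
      push_cast
      rw [abs_mul, hsign, one_mul]
    rwa [h1, hcabs] at H
  -- positivity and the max comparison
  have hA : (0 : ℝ) < |(a : ℝ)| := abs_pos.mpr (by exact_mod_cast ha)
  have hC : (0 : ℝ) < |(c : ℝ)| := abs_pos.mpr (by exact_mod_cast hc)
  have hM : (0 : ℝ) < max |(a : ℝ)| |(c : ℝ)| := lt_max_of_lt_left hA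
  have hb2 : |(b : ℝ)| ≤ |(a : ℝ)| + |(c : ℝ)| := by
    have : (b : ℝ) = (c : ℝ) - (a : ℝ) := by exact_mod_cast congrArg (fun x : ℤ => (x : ℝ)) hb'
    rw [this]
    calc |(c : ℝ) - (a : ℝ)| ≤ |(c : ℝ)| + |(a : ℝ)| := abs_sub _ _
      _ = |(a : ℝ)| + |(c : ℝ)| := by ring
  have hmax : max |(a : ℝ)| (max |(b : ℝ)| |(c : ℝ)|) ≤ 2 * max |(a : ℝ)| |(c : ℝ)| := by
    have m1 : |(a : ℝ)| ≤ max |(a : ℝ)| |(c : ℝ)| := le_max_left _ _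
    have m2 : |(c : ℝ)| ≤ max |(a : ℝ)| |(c : ℝ)| := le_max_right _ _
    refine max_le (by linarith) (max_le (by linarith) (by linarith))
  have hpos : (0 : ℝ) < max |(a : ℝ)| (max |(b : ℝ)| |(c : ℝ)|) := lt_max_of_lt_left hA
  calc Real.log (max |(a : ℝ)| (max |(b : ℝ)| |(c : ℝ)|))
      ≤ Real.log (2 * max |(a : ℝ)| |(c : ℝ)|) := Real.log_le_log hpos hmax
    _ = Real.log 2 + Real.log (max |(a : ℝ)| |(c : ℝ)|) :=
        Real.log_mul (by norm_num) (ne_of_gt hM)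
    _ ≤ k₁ * (∑ p ∈ S, Real.log p) + k₃ + Real.log 2 := by linarith
end
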